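/- For any two density matrices ρ and σ of the same finite dimension and any real η > 0, the density matrix ω := (2^{−η} σ + ρ)/(1 + 2^{−η}) satisfies both (1/2)‖ω − ρ‖₁ ≤ 2^{−η}/(1 + 2^{−η}) and D_Ω(ω‖σ) ≤ D_max(ρ‖σ) + log₂(2^η + 1). -/

import Mathlib

open scoped BigOperators ComplexOrder
open Filter Topology

noncomputable section

namespace QRT

open scoped Classical

variable {ι κ : Type*} [Fintype ι] [DecidableEq ι] [Fintype κ] [DecidableEq κ]

/-- A density matrix (quantum state): positive semidefinite with unit trace. -/
def IsState (ρ : Matrix ι ι ℂ) : Prop :=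
  ρ.PosSemidef ∧ ρ.trace = 1

/-- Loewner order: `A ≤ B` iff `B - A` is positive semidefinite. -/
def Loewner (A B : Matrix ι ι ℂ) : Prop :=
  (B - A).PosSemidef

/-- Trace norm (sum of singular values): `‖A‖₁ = Tr √(AᴴA)`. -/
def traceNorm (A : Matrix ι ι ℂ) : ℝ :=
  (((Matrix.posSemidef_conjTranspose_mul_self A).1.eigenvectorUnitary : Matrix ι ι ℂ) *
      Matrix.diagonal (((↑) : ℝ → ℂ) ∘ (Real.sqrt ·) ∘ (Matrix.posSemidef_conjTranspose_mul_self A).1.eigenvalues) *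
      (star (Matrix.posSemidef_conjTranspose_mul_self A).1.eigenvectorUnitary : Matrix ι ι ℂ)).trace.re

/-- The max-relative entropy `D_max(ρ‖σ)` (base 2); `+∞` if infeasible. -/
def Dmax (ρ σ : Matrix ι ι ℂ) : EReal :=
  sInf {x : EReal | ∃ l : ℝ, 0 < l ∧ Loewner ρ (l • σ) ∧ x = ((Real.logb 2 l : ℝ) : EReal)}

/-- The projective relative entropy (Hilbert projective metric). -/
def DOmega (ρ σ : Matrix ι ι ℂ) : EReal :=
  Dmax ρ σ + Dmax σ ρ

/-- Support inclusion `supp ρ ⊆ supp σ` for positive semidefinite matrices,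
expressed as kernel inclusion `ker σ ⊆ ker ρ`. -/
def SuppLe (ρ σ : Matrix ι ι ℂ) : Prop :=
  ∀ v : ι → ℂ, σ.mulVec v = 0 → ρ.mulVec v = 0

/-- Application of a real function to a Hermitian matrix via the spectral decomposition. -/
def mfun (f : ℝ → ℝ) (A : Matrix ι ι ℂ) : Matrix ι ι ℂ :=
  if hA : A.IsHermitian then
    (hA.eigenvectorUnitary : Matrix ι ι ℂ) *
      Matrix.diagonal (fun i => (f (hA.eigenvalues i) : ℂ)) *
      (hA.eigenvectorUnitary : Matrix ι ι ℂ).conjTranspose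
  else 0

/-- Base-2 matrix logarithm on the support of a positive semidefinite matrix. -/
def mlog2 (A : Matrix ι ι ℂ) : Matrix ι ι ℂ :=
  mfun (fun x => if x ≤ 0 then 0 else Real.logb 2 x) A

/-- Umegaki quantum relative entropy (base 2):
`D(ρ‖σ) = Tr[ρ (log₂ ρ - log₂ σ)]` if `supp ρ ⊆ supp σ`, and `+∞` otherwise. -/
def Drel (ρ σ : Matrix ι ι ℂ) : EReal :=
  if SuppLe ρ σ then (((ρ * (mlog2 ρ - mlog2 σ)).trace.re : ℝ) : EReal) else ⊤

/-- Relative entropy of a resource: `D_F(ρ) = min_{σ ∈ F} D(ρ‖σ)`. -/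
def DF (F : Set (Matrix ι ι ℂ)) (ρ : Matrix ι ι ℂ) : EReal :=
  sInf {x : EReal | ∃ σ ∈ F, x = Drel ρ σ}

/-- Max-relative entropy of a resource. -/
def DmaxF (F : Set (Matrix ι ι ℂ)) (ρ : Matrix ι ι ℂ) : EReal :=
  sInf {x : EReal | ∃ σ ∈ F, x = Dmax ρ σ}

/-- Projective relative entropy of a resource: `D_{Ω,F}(ρ) = min_{σ ∈ F} D_Ω(ρ‖σ)`. -/
def DOmegaF (F : Set (Matrix ι ι ℂ)) (ρ : Matrix ι ι ℂ) : EReal :=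
  sInf {x : EReal | ∃ σ ∈ F, x = DOmega ρ σ}

/-- Min-relative entropy of a resource for a pure state `ψ`:
`D_{min,F}(ψ) = min_{σ∈F} (-log₂⟨ψ|σ|ψ⟩)` where `⟨ψ|σ|ψ⟩ = Tr(ψσ)`. -/
def DminF (F : Set (Matrix ι ι ℂ)) (ψ : Matrix ι ι ℂ) : EReal :=
  sInf {x : EReal | ∃ σ ∈ F, 0 < ((ψ * σ).trace).re ∧
    x = ((-(Real.logb 2 (((ψ * σ).trace).re)) : ℝ) : EReal)}

/-- The convex cone generated by a set of states. -/
def cone (F : Set (Matrix ι ι ℂ)) : Set (Matrix ι ι ℂ) :=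
  {A | ∃ t : ℝ, 0 ≤ t ∧ ∃ σ ∈ F, A = t • σ}

/-- `D_s(ω‖σ) := inf { log₂ λ : λ > 0, λσ - ω ∈ cone(F) }`. -/
def Ds (F : Set (Matrix ι ι ℂ)) (ω σ : Matrix ι ι ℂ) : EReal :=
  sInf {x : EReal | ∃ l : ℝ, 0 < l ∧ (l • σ - ω) ∈ cone F ∧ x = ((Real.logb 2 l : ℝ) : EReal)}

/-- The free variant of the projective relative entropy:
`D_{Ω,s,F}(ω) := min_{σ∈F} [ D_s(ω‖σ) + D_max(σ‖ω) ]`. -/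
def DOmegasF (F : Set (Matrix ι ι ℂ)) (ω : Matrix ι ι ℂ) : EReal :=
  sInf {x : EReal | ∃ σ ∈ F, x = Ds F ω σ + Dmax σ ω}

/-- The standard robustness `R_{s,F}(ρ) := inf{ λ ≥ 0 : ∃ σ ∈ F, (ρ+λσ)/(1+λ) ∈ F }`,
as an extended real (`+∞` if infeasible). -/
def Rs (F : Set (Matrix ι ι ℂ)) (ρ : Matrix ι ι ℂ) : EReal :=
  sInf {x : EReal | ∃ l : ℝ, 0 ≤ l ∧ (∃ σ ∈ F, ((1 + l)⁻¹ • (ρ + l • σ)) ∈ F) ∧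
    x = ((l : ℝ) : EReal)}

/-- `log₂(1 + R_{s,F}(ρ))`, the logarithmic standard robustness. -/
def logRs (F : Set (Matrix ι ι ℂ)) (ρ : Matrix ι ι ℂ) : EReal :=
  sInf {x : EReal | ∃ l : ℝ, 0 ≤ l ∧ (∃ σ ∈ F, ((1 + l)⁻¹ • (ρ + l • σ)) ∈ F) ∧
    x = ((Real.logb 2 (1 + l) : ℝ) : EReal)}

/-- The Choi matrix of a linear map on matrices. -/
def choi (Λ : Matrix ι ι ℂ →ₗ[ℂ] Matrix κ κ ℂ) : Matrix (ι × κ) (ι × κ) ℂ :=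
  Matrix.of fun p q => Λ (Matrix.single p.1 q.1 1) p.2 q.2

/-- Complete positivity, via Choi's theorem. -/
def IsCP (Λ : Matrix ι ι ℂ →ₗ[ℂ] Matrix κ κ ℂ) : Prop :=
  (choi Λ).PosSemidef

/-- Trace non-increasing on positive semidefinite inputs. -/
def TraceNonincreasing (Λ : Matrix ι ι ℂ →ₗ[ℂ] Matrix κ κ ℂ) : Prop :=
  ∀ A : Matrix ι ι ℂ, A.PosSemidef → ((Λ A).trace).re ≤ (A.trace).re

/-- Normalization `A ↦ A / Tr A`. -/
def normalize (A : Matrix ι ι ℂ) : Matrix ι ι ℂ :=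
  (A.trace)⁻¹ • A

/-- A free probabilistic operation: a completely positive trace–non-increasing map
that sends free states of `F` to free states of `F'` after renormalization. -/
def IsFreeOp (F : Set (Matrix ι ι ℂ)) (F' : Set (Matrix κ κ ℂ))
    (Λ : Matrix ι ι ℂ →ₗ[ℂ] Matrix κ κ ℂ) : Prop :=
  IsCP Λ ∧ TraceNonincreasing Λ ∧
    ∀ σ ∈ F, 0 < ((Λ σ).trace).re → normalize (Λ σ) ∈ F'

/-- `n`-fold tensor (Kronecker) power of a matrix, indexed by `Fin n → ι`. -/
def tpow (ρ : Matrix ι ι ℂ) (n : ℕ) : Matrix (Fin n → ι) (Fin n → ι) ℂ :=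
  Matrix.of fun i j => ∏ k, ρ (i k) (j k)

/-- Tensor product of tensor-power-indexed matrices. -/
def tmul {n m : ℕ} (A : Matrix (Fin n → ι) (Fin n → ι) ℂ)
    (B : Matrix (Fin m → ι) (Fin m → ι) ℂ) :
    Matrix (Fin (n + m) → ι) (Fin (n + m) → ι) ℂ :=
  Matrix.of fun i j =>
    A (fun k => i (Fin.castAdd m k)) (fun k => j (Fin.castAdd m k)) *
      B (fun k => i (Fin.natAdd n k)) (fun k => j (Fin.natAdd n k))

/-- Partial trace over the tensor factor in position `k`. -/
def ptrace {n : ℕ} (σ : Matrix (Fin (n + 1) → ι) (Fin (n + 1) → ι) ℂ) (k : Fin (n + 1)) :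
    Matrix (Fin n → ι) (Fin n → ι) ℂ :=
  Matrix.of fun i j => ∑ x : ι, σ (k.insertNth x i) (k.insertNth x j)

/-- Axioms I–IV for a family of free-state sets on tensor powers of `ℂ^d`:
convex closed sets of states, containing the powers of a full-rank free state,
closed under partial traces and under tensor products. -/
structure IsFreeFamily (d : ℕ)
    (F : ∀ n : ℕ, Set (Matrix (Fin n → Fin d) (Fin n → Fin d) ℂ)) : Prop where
  states : ∀ n, ∀ σ ∈ F n, IsState σ
  convex : ∀ n, Convex ℝ (F n)
  closed : ∀ n, IsClosed (F n)
  fullRank : ∃ σ : Matrix (Fin d) (Fin d) ℂ, IsState σ ∧ σ.PosDef ∧ ∀ n, tpow σ n ∈ F n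
  ptrace_mem : ∀ n, ∀ σ ∈ F (n + 1), ∀ k : Fin (n + 1), ptrace σ k ∈ F n
  tmul_mem : ∀ n m, ∀ σ ∈ F n, ∀ σ' ∈ F m, tmul σ σ' ∈ F (n + m)

variable {I K : ℕ → Type*} [∀ n, Fintype (I n)] [∀ n, DecidableEq (I n)]
  [∀ n, Fintype (K n)] [∀ n, DecidableEq (K n)]

/-- The smallest trace-distance error achievable when transforming `ρseq n` into
`ωseq ⌊rn⌋` by free probabilistic operations. -/
def convErr (F : ∀ n, Set (Matrix (I n) (I n) ℂ)) (F' : ∀ n, Set (Matrix (K n) (K n) ℂ))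
    (ρseq : ∀ n, Matrix (I n) (I n) ℂ) (ωseq : ∀ n, Matrix (K n) (K n) ℂ)
    (r : ℝ) (n : ℕ) : ℝ :=
  sInf {e : ℝ |
    ∃ Λ : Matrix (I n) (I n) ℂ →ₗ[ℂ] Matrix (K ⌊r * n⌋₊) (K ⌊r * n⌋₊) ℂ,
      IsFreeOp (F n) (F' ⌊r * n⌋₊) Λ ∧
      e = (1 / 2) * traceNorm (normalize (Λ (ρseq n)) - ωseq ⌊r * n⌋₊)}

/-- The probabilistic transformation rate `r_prob`, as an extended real. -/
def rprob (F : ∀ n, Set (Matrix (I n) (I n) ℂ)) (F' : ∀ n, Set (Matrix (K n) (K n) ℂ))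
    (ρseq : ∀ n, Matrix (I n) (I n) ℂ) (ωseq : ∀ n, Matrix (K n) (K n) ℂ) : EReal :=
  sSup {x : EReal | ∃ r : ℝ, 0 ≤ r ∧ x = (r : EReal) ∧
    Tendsto (fun n => convErr F F' ρseq ωseq r n) atTop (nhds 0)}

/-- The strong converse probabilistic transformation rate `r†_prob`. -/
def rprobSC (F : ∀ n, Set (Matrix (I n) (I n) ℂ)) (F' : ∀ n, Set (Matrix (K n) (K n) ℂ))
    (ρseq : ∀ n, Matrix (I n) (I n) ℂ) (ωseq : ∀ n, Matrix (K n) (K n) ℂ) : EReal :=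
  sSup {x : EReal | ∃ r : ℝ, 0 ≤ r ∧ x = (r : EReal) ∧
    liminf (fun n => convErr F F' ρseq ωseq r n) atTop < 1}

/-- A pure state `ψ = |v⟩⟨v|` with `‖v‖ = 1`. -/
def IsPure (ψ : Matrix ι ι ℂ) : Prop :=
  IsState ψ ∧ ∃ v : ι → ℂ, ψ = Matrix.of fun i j => v i * (starRingEnd ℂ) (v j)

/-- Tensor product across the A/B bipartition of `n`-copy bipartite operators. -/
def abProd {dA dB n : ℕ} (A : Matrix (Fin n → Fin dA) (Fin n → Fin dA) ℂ)
    (B : Matrix (Fin n → Fin dB) (Fin n → Fin dB) ℂ) :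
    Matrix (Fin n → Fin dA × Fin dB) (Fin n → Fin dA × Fin dB) ℂ :=
  Matrix.of fun i j =>
    A (fun k => (i k).1) (fun k => (j k).1) * B (fun k => (i k).2) (fun k => (j k).2)

/-- Separable states on `n` copies of a bipartite system `ℂ^{dA} ⊗ ℂ^{dB}`, with respect to
the bipartition grouping all `A` factors against all `B` factors. -/
def SEP (dA dB n : ℕ) :
    Set (Matrix (Fin n → Fin dA × Fin dB) (Fin n → Fin dA × Fin dB) ℂ) :=
  closure (convexHull ℝ {ρ | ∃ A B, IsState A ∧ IsState B ∧ ρ = abProd A B})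

/-- Separable states on a single copy of `ℂ^{dA} ⊗ ℂ^{dB}`. -/
def SEP1 (dA dB : ℕ) : Set (Matrix (Fin dA × Fin dB) (Fin dA × Fin dB) ℂ) :=
  closure (convexHull ℝ
    {ρ | ∃ (A : Matrix (Fin dA) (Fin dA) ℂ) (B : Matrix (Fin dB) (Fin dB) ℂ),
      IsState A ∧ IsState B ∧ ρ = Matrix.of fun p q => A p.1 q.1 * B p.2 q.2})

/-- Partial transpose on the second subsystem (single copy). -/
def ptrans1 {dA dB : ℕ} (M : Matrix (Fin dA × Fin dB) (Fin dA × Fin dB) ℂ) :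
    Matrix (Fin dA × Fin dB) (Fin dA × Fin dB) ℂ :=
  Matrix.of fun p q => M (p.1, q.2) (q.1, p.2)

/-- PPT states on a single copy. -/
def PPT1 (dA dB : ℕ) : Set (Matrix (Fin dA × Fin dB) (Fin dA × Fin dB) ℂ) :=
  {σ | IsState σ ∧ (ptrans1 σ).PosSemidef}

/-- Partial transpose over all `B` factors of an `n`-copy bipartite system. -/
def ptransN {dA dB n : ℕ}
    (M : Matrix (Fin n → Fin dA × Fin dB) (Fin n → Fin dA × Fin dB) ℂ) :
    Matrix (Fin n → Fin dA × Fin dB) (Fin n → Fin dA × Fin dB) ℂ :=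
  Matrix.of fun i j => M (fun k => ((i k).1, (j k).2)) (fun k => ((j k).1, (i k).2))

/-- PPT states on `n` copies, w.r.t. the bipartition grouping all `A` factors
against all `B` factors. -/
def PPTn (dA dB n : ℕ) :
    Set (Matrix (Fin n → Fin dA × Fin dB) (Fin n → Fin dA × Fin dB) ℂ) :=
  {σ | IsState σ ∧ (ptransN σ).PosSemidef}

/-- The maximally entangled state `Φ_d` on `ℂ^d ⊗ ℂ^d`. -/
def PhiMax (d : ℕ) : Matrix (Fin d × Fin d) (Fin d × Fin d) ℂ :=
  Matrix.of fun p q => if p.1 = p.2 ∧ q.1 = q.2 then ((d : ℂ))⁻¹ else 0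

/-- The isotropic state `ρ_p = p Φ_d + (1-p)(I - Φ_d)/(d²-1)`. -/
def iso (d : ℕ) (p : ℝ) : Matrix (Fin d × Fin d) (Fin d × Fin d) ℂ :=
  p • PhiMax d + ((1 - p) / ((d : ℝ) ^ 2 - 1)) • (1 - PhiMax d)

/-!
With `t = 2^{-η}`, `ω - ρ = (t / (1 + t)) • (σ - ρ)` and the trace norm of a difference of two
states is at most `2`. Mixing `σ` into `ρ` can only lower `D_max(· ‖ σ)`, since `ρ ≤ l σ` with
`l ≥ 1` gives `ω ≤ ((t + l) / (1 + t)) σ`; and `(t⁻¹ + 1) ω - σ = t⁻¹ ρ ≥ 0` bounds `D_max(σ ‖ ω)`.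
-/

open scoped Matrix

section TraceNorm

variable {ι : Type*} [Fintype ι] [DecidableEq ι]

lemma traceNorm_eq_re_trace_cfc_sqrt (A : Matrix ι ι ℂ) :
    traceNorm A = (cfc Real.sqrt (Aᴴ * A)).trace.re := by
  rw [(Matrix.posSemidef_conjTranspose_mul_self A).1.cfc_eq]
  rfl

lemma trace_cfc_eq_sum_eigenvalues {A : Matrix ι ι ℂ} (hA : A.IsHermitian) (f : ℝ → ℝ) :
    (cfc f A).trace = ∑ i, (f (hA.eigenvalues i) : ℂ) := by
  rw [hA.cfc_eq, Matrix.IsHermitian.cfc, Unitary.conjStarAlgAut_apply, Matrix.trace_mul_cycle,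
    Unitary.coe_star_mul_self, one_mul, Matrix.trace_diagonal]
  rfl

lemma traceNorm_eq_sum_abs_eigenvalues {A : Matrix ι ι ℂ} (hA : A.IsHermitian) :
    traceNorm A = ∑ i, |hA.eigenvalues i| := by
  have hsq : Aᴴ * A = cfc (fun x : ℝ => x * x) A := by
    rw [hA.eq, cfc_mul (fun x : ℝ => x) (fun x : ℝ => x) A, cfc_id' ℝ A]
  rw [traceNorm_eq_re_trace_cfc_sqrt, hsq, ← cfc_comp' Real.sqrt (fun x : ℝ => x * x) A,
    trace_cfc_eq_sum_eigenvalues hA]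
  simp [Real.sqrt_mul_self_eq_abs]

/- In an eigenbasis `U` of `A - B` each eigenvalue is `(U*AU)ᵢᵢ - (U*BU)ᵢᵢ`, a difference of
two nonnegative reals, so its absolute value is at most their sum. -/
lemma traceNorm_sub_le {A B : Matrix ι ι ℂ} (hA : A.PosSemidef) (hB : B.PosSemidef) :
    traceNorm (A - B) ≤ (A.trace + B.trace).re := by
  have hX : (A - B).IsHermitian := hA.1.sub hB.1
  set U : Matrix ι ι ℂ := (hX.eigenvectorUnitary : Matrix ι ι ℂ)
  have hUA : (star U * A * U).PosSemidef := by
    simpa [Matrix.star_eq_conjTranspose] using hA.conjTranspose_mul_mul_same U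
  have hUB : (star U * B * U).PosSemidef := by
    simpa [Matrix.star_eq_conjTranspose] using hB.conjTranspose_mul_mul_same U
  have heig (i : ι) :
      hX.eigenvalues i = ((star U * A * U) i i).re - ((star U * B * U) i i).re := by
    have h := congrArg Complex.re
      (congrFun (congrFun hX.conjStarAlgAut_star_eigenvectorUnitary i) i)
    simpa [Unitary.conjStarAlgAut_star_apply, U, Matrix.mul_sub, Matrix.sub_mul] using h.symm
  have htrace (M : Matrix ι ι ℂ) : (star U * M * U).trace = M.trace := by
    rw [Matrix.trace_mul_cycle, Matrix.mem_unitaryGroup_iff.mp hX.eigenvectorUnitary.2, one_mul]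
  rw [traceNorm_eq_sum_abs_eigenvalues hX, ← htrace A, ← htrace B, Matrix.trace, Matrix.trace,
    ← Finset.sum_add_distrib, Complex.re_sum]
  refine Finset.sum_le_sum fun i _ => ?_
  have hAi := (Complex.nonneg_iff.mp (hUA.diag_nonneg (i := i))).1
  have hBi := (Complex.nonneg_iff.mp (hUB.diag_nonneg (i := i))).1
  rw [heig, Matrix.diag_apply, Matrix.diag_apply, Complex.add_re]
  exact abs_le.mpr ⟨by linarith, by linarith⟩

lemma half_traceNorm_mix_sub_le {ρ σ : Matrix ι ι ℂ} (hρ : IsState ρ) (hσ : IsState σ)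
    {t : ℝ} (ht : 0 ≤ t) :
    (1 / 2) * traceNorm ((1 + t)⁻¹ • (t • σ + ρ) - ρ) ≤ t / (1 + t) := by
  have hc : 0 ≤ t / (1 + t) := by positivity
  have hsub : (1 + t)⁻¹ • (t • σ + ρ) - ρ = (t / (1 + t)) • σ - (t / (1 + t)) • ρ := by
    match_scalars <;> grind
  have h := traceNorm_sub_le (hσ.1.smul hc) (hρ.1.smul hc)
  rw [Matrix.trace_smul, Matrix.trace_smul, hσ.2, hρ.2] at h
  rw [hsub]
  simp only [Complex.add_re, Complex.real_smul, mul_one, Complex.ofReal_re] at h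
  linarith

end TraceNorm

section Dmax

variable {ι : Type*}

lemma Dmax_le_logb {ρ σ : Matrix ι ι ℂ} {l : ℝ} (hl : 0 < l) (h : Loewner ρ (l • σ)) :
    Dmax ρ σ ≤ ((Real.logb 2 l : ℝ) : EReal) :=
  sInf_le ⟨l, hl, h, rfl⟩

lemma one_le_of_loewner_smul [Fintype ι] {ρ σ : Matrix ι ι ℂ} (hρ : ρ.trace = 1)
    (hσ : σ.trace = 1) {l : ℝ} (h : Loewner ρ (l • σ)) : 1 ≤ l := by
  have h0 := Complex.nonneg_iff.mp h.trace_nonneg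
  rw [Matrix.trace_sub, Matrix.trace_smul, hσ, hρ] at h0
  simpa using h0.1

lemma Dmax_mix_le [Fintype ι] {ρ σ : Matrix ι ι ℂ} (hρ : ρ.trace = 1) (hσ : σ.trace = 1)
    {t : ℝ} (ht : 0 ≤ t) : Dmax ((1 + t)⁻¹ • (t • σ + ρ)) σ ≤ Dmax ρ σ := by
  refine le_sInf ?_
  rintro _ ⟨l, hl, h, rfl⟩
  have hl1 := one_le_of_loewner_smul hρ hσ h
  have hmix : Loewner ((1 + t)⁻¹ • (t • σ + ρ)) (((t + l) / (1 + t)) • σ) := by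
    have heq : ((t + l) / (1 + t)) • σ - (1 + t)⁻¹ • (t • σ + ρ) = (1 + t)⁻¹ • (l • σ - ρ) := by
      match_scalars <;> grind
    rw [Loewner, heq]
    exact Matrix.PosSemidef.smul h (by positivity)
  have hle : (t + l) / (1 + t) ≤ l := by
    rw [div_le_iff₀ (by positivity)]
    nlinarith
  calc Dmax ((1 + t)⁻¹ • (t • σ + ρ)) σ ≤ ((Real.logb 2 ((t + l) / (1 + t)) : ℝ) : EReal) :=
        Dmax_le_logb (by positivity) hmix
    _ ≤ ((Real.logb 2 l : ℝ) : EReal) := by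
        exact_mod_cast Real.logb_le_logb_of_le one_lt_two (by positivity) hle

lemma Dmax_le_logb_of_mix [Fintype ι] {ρ σ : Matrix ι ι ℂ} (hρ : ρ.PosSemidef) {t : ℝ}
    (ht : 0 < t) :
    Dmax σ ((1 + t)⁻¹ • (t • σ + ρ)) ≤ ((Real.logb 2 (t⁻¹ + 1) : ℝ) : EReal) := by
  refine Dmax_le_logb (by positivity) ?_
  have heq : (t⁻¹ + 1) • ((1 + t)⁻¹ • (t • σ + ρ)) - σ = t⁻¹ • ρ := by
    match_scalars <;> grind
  rw [Loewner, heq]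
  exact hρ.smul (by positivity)

end Dmax

theorem mixing_preserves_closeness_and_projective_bound_general {d : ℕ}
    (ρ σ : Matrix (Fin d) (Fin d) ℂ) (hρ : IsState ρ) (hσ : IsState σ)
    (η : ℝ)
    (ω : Matrix (Fin d) (Fin d) ℂ)
    (hω : ω = (1 + (2 : ℝ) ^ (-η))⁻¹ • ((2 : ℝ) ^ (-η) • σ + ρ)) :
    (1 / 2) * traceNorm (ω - ρ) ≤ (2 : ℝ) ^ (-η) / (1 + (2 : ℝ) ^ (-η)) ∧
    DOmega ω σ ≤ Dmax ρ σ + ((Real.logb 2 ((2 : ℝ) ^ η + 1) : ℝ) : EReal) := by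
  subst hω
  have ht : 0 < (2 : ℝ) ^ (-η) := Real.rpow_pos_of_pos two_pos _
  have htinv : ((2 : ℝ) ^ (-η))⁻¹ = (2 : ℝ) ^ η := by rw [Real.rpow_neg zero_le_two, inv_inv]
  refine ⟨half_traceNorm_mix_sub_le hρ hσ ht.le, ?_⟩
  rw [← htinv]
  exact add_le_add (Dmax_mix_le hρ.2 hσ.2 ht.le) (Dmax_le_logb_of_mix hρ.1 ht)

/-- For states `ρ, σ` and `η > 0`, the state
`ω := (2^{-η} σ + ρ)/(1 + 2^{-η})` satisfies `½‖ω - ρ‖₁ ≤ 2^{-η}/(1 + 2^{-η})` and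
`D_Ω(ω‖σ) ≤ D_max(ρ‖σ) + log₂(2^η + 1)`. -/
theorem mixing_preserves_closeness_and_projective_bound {d : ℕ}
    (ρ σ : Matrix (Fin d) (Fin d) ℂ) (hρ : IsState ρ) (hσ : IsState σ)
    (η : ℝ) (hη : 0 < η)
    (ω : Matrix (Fin d) (Fin d) ℂ)
    (hω : ω = (1 + (2 : ℝ) ^ (-η))⁻¹ • ((2 : ℝ) ^ (-η) • σ + ρ)) :
    (1 / 2) * traceNorm (ω - ρ) ≤ (2 : ℝ) ^ (-η) / (1 + (2 : ℝ) ^ (-η)) ∧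
    DOmega ω σ ≤ Dmax ρ σ + ((Real.logb 2 ((2 : ℝ) ^ η + 1) : ℝ) : EReal) :=
  mixing_preserves_closeness_and_projective_bound_general ρ σ hρ hσ η ω hω

end QRT
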